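/- For every finite graph G and integers r ≥ 0 and t ≥ 1, bn_r(G) ≤ t · bn_{3r+1, t}(G), where bn_{k,t}(G) is the maximum order of a depth-k t-bramble of G. -/

import Mathlib

open SimpleGraph

variable {V : Type*}

/-- `B` induces a connected subgraph of `G`. -/
def ConnSet (G : SimpleGraph V) (B : Set V) : Prop := (G.induce B).Connected

/-- `B` induces a subgraph of `G` of radius at most `r`. -/
def RadiusLE (G : SimpleGraph V) (B : Set V) (r : ℕ) : Prop :=
  ∃ u : B, ∀ v : B, (G.induce B).dist u v ≤ r

/-- Two vertex sets touch: they share a vertex or are joined by an edge. -/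
def Touch (G : SimpleGraph V) (A B : Set V) : Prop :=
  (A ∩ B).Nonempty ∨ ∃ a ∈ A, ∃ b ∈ B, G.Adj a b

/-- A depth-`r` bramble. -/
def IsBramble (G : SimpleGraph V) (r : ℕ) (𝓑 : Finset (Set V)) : Prop :=
  (∀ B ∈ 𝓑, ConnSet G B ∧ RadiusLE G B r) ∧ ∀ B ∈ 𝓑, ∀ C ∈ 𝓑, Touch G B C

/-- A bramble with no bound on the radius of its elements. -/
def IsBrambleND (G : SimpleGraph V) (𝓑 : Finset (Set V)) : Prop :=
  (∀ B ∈ 𝓑, ConnSet G B) ∧ ∀ B ∈ 𝓑, ∀ C ∈ 𝓑, Touch G B C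

def IsHittingSet (𝓑 : Finset (Set V)) (X : Finset V) : Prop :=
  ∀ B ∈ 𝓑, ∃ x ∈ X, x ∈ B

/-- The order of a bramble: minimum size of a hitting set. -/
noncomputable def brambleOrder (𝓑 : Finset (Set V)) : ℕ :=
  sInf {n | ∃ X : Finset V, X.card = n ∧ IsHittingSet 𝓑 X}

/-- The depth-`r` bramble number. -/
noncomputable def bn (G : SimpleGraph V) (r : ℕ) : ℕ :=
  sSup {n | ∃ 𝓑 : Finset (Set V), IsBramble G r 𝓑 ∧ brambleOrder 𝓑 = n}

/-- A depth-`r` `t`-bramble: any `t` (not necessarily distinct) elements intersect. -/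
def IsTBramble (G : SimpleGraph V) (r t : ℕ) (𝓑 : Finset (Set V)) : Prop :=
  IsBramble G r 𝓑 ∧ ∀ f : Fin t → Set V, (∀ i, f i ∈ 𝓑) → (⋂ i, f i).Nonempty

/-- The depth-`r` `t`-bramble number. -/
noncomputable def bnT (G : SimpleGraph V) (r t : ℕ) : ℕ :=
  sSup {n | ∃ 𝓑 : Finset (Set V), IsTBramble G r t 𝓑 ∧ brambleOrder 𝓑 = n}

/-- A depth-`r` tangle. -/
def IsTangle (G : SimpleGraph V) (r : ℕ) (𝓑 : Finset (Set V)) : Prop :=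
  IsBramble G r 𝓑 ∧ ∀ T₁ ∈ 𝓑, ∀ T₂ ∈ 𝓑, ∀ T₃ ∈ 𝓑,
    (T₁ ∩ T₂ ∩ T₃).Nonempty ∨
      ∃ a b : V, G.Adj a b ∧ (a ∈ T₁ ∨ b ∈ T₁) ∧ (a ∈ T₂ ∨ b ∈ T₂) ∧ (a ∈ T₃ ∨ b ∈ T₃)

/-- The depth-`r` tangle number. -/
noncomputable def tn (G : SimpleGraph V) (r : ℕ) : ℕ :=
  sSup {n | ∃ 𝓑 : Finset (Set V), IsTangle G r 𝓑 ∧ brambleOrder 𝓑 = n}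

/-- The set of vertices strongly `k`-reachable from `v` w.r.t. the linear order
given by the embedding `π : V ↪ ℕ`. -/
def SReach (G : SimpleGraph V) (π : V ↪ ℕ) (k : ℕ) (v : V) : Set V :=
  {u | π u ≤ π v ∧ ∃ p : G.Walk v u, p.IsPath ∧ p.length ≤ k ∧
    ∀ w ∈ p.support, w ≠ v → w ≠ u → π v < π w}

/-- The strong `k`-coloring number. -/
noncomputable def scol (G : SimpleGraph V) (k : ℕ) : ℕ :=
  sInf {n | ∃ π : V ↪ ℕ, ∀ v : V, (SReach G π k v).ncard ≤ n}

/-- A depth-`r` minor-model of `H` in `G`. -/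
def IsMinorModel {W : Type*} (G : SimpleGraph V) (H : SimpleGraph W) (r : ℕ)
    (M : W → Set V) : Prop :=
  (∀ w, ConnSet G (M w) ∧ RadiusLE G (M w) r) ∧
  (Pairwise fun w w' => Disjoint (M w) (M w')) ∧
  ∀ ⦃w w'⦄, H.Adj w w' → ∃ a ∈ M w, ∃ b ∈ M w', G.Adj a b

/-- `ω_r(G)`: the largest `t` such that `K_t` is a depth-`r` minor of `G`. -/
noncomputable def cliqueMinorNum (G : SimpleGraph V) (r : ℕ) : ℕ :=
  sSup {t | ∃ M : Fin t → Set V, IsMinorModel G (⊤ : SimpleGraph (Fin t)) r M}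

/-- `grid_r(G)`: the largest `t` such that the `t × t` grid is a depth-`r` minor of `G`. -/
noncomputable def gridMinorNum (G : SimpleGraph V) (r : ℕ) : ℕ :=
  sSup {t | ∃ M : Fin t × Fin t → Set V,
    IsMinorModel G (SimpleGraph.pathGraph t □ SimpleGraph.pathGraph t) r M}

/-- `S` is depth-`r` `k`-linked. -/
def IsLinkedSet (G : SimpleGraph V) (r k : ℕ) (S : Set V) : Prop :=
  ∀ X : Finset V, X.card < k →
    ∃ B : Set V, (∀ x ∈ X, x ∉ B) ∧ ConnSet G B ∧ RadiusLE G B r ∧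
      S.ncard < 2 * (S ∩ B).ncard

/-- The depth-`r` linkedness of `G`. -/
noncomputable def linkNum (G : SimpleGraph V) (r : ℕ) : ℕ :=
  sSup {k | ∃ S : Set V, IsLinkedSet G r k S}

/-- `S` is depth-`r` well-linked. -/
def IsWellLinkedSet (G : SimpleGraph V) (r : ℕ) (S : Set V) : Prop :=
  ∀ A B : Finset V, ↑A ⊆ S → ↑B ⊆ S → A.card = B.card →
    ∀ Y : Finset V, Y.card < A.card →
      ∃ (a b : V) (p : G.Walk a b), a ∈ A ∧ b ∈ B ∧ p.IsPath ∧ p.length ≤ r ∧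
        ∀ w ∈ p.support, w ∉ Y

/-- The depth-`r` well-linkedness of `G`. -/
noncomputable def wellNum (G : SimpleGraph V) (r : ℕ) : ℕ :=
  sSup {n | ∃ S : Set V, IsWellLinkedSet G r S ∧ S.ncard = n}

/-!
Let `S` be a minimum hitting set of a depth-`r` bramble `𝓑` of order `k ≥ 1`, and put
`s = ⌊(k - 1) / t⌋`, so that `t s < k ≤ t (s + 1)`. For `t ≥ 2`, the connected sets of radius at
most `3r + 1` missing at most `s` vertices of `S` form a `t`-bramble: any `t` of them miss at most
`t s < |S|` vertices of `S` together. No set `X` of at most `s` vertices hits all of them: the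
elements of `𝓑` avoiding `X` still touch pairwise, so their union `C` is connected of radius at
most `3r + 1`, and as `X ∪ (S ∩ C)` hits `𝓑`, `C` misses at most `|X| ≤ s` vertices of `S`.
For `t = 1` the bramble itself is a depth-`(3r + 1)` `1`-bramble.
-/

open Finset

section InducedDistance

variable {G : SimpleGraph V}

lemma ConnSet.nonempty {B : Set V} (h : ConnSet G B) : B.Nonempty :=
  Set.nonempty_coe_sort.mp (Connected.nonempty h)

lemma RadiusLE.mono {B : Set V} {m n : ℕ} (h : RadiusLE G B m) (hmn : m ≤ n) :
    RadiusLE G B n :=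
  let ⟨u, hu⟩ := h; ⟨u, fun v => (hu v).trans hmn⟩

lemma edist_induce_le_dist_of_subset {B C : Set V} (hBC : B ⊆ C) (hB : ConnSet G B)
    (u v : B) :
    (G.induce C).edist (Set.inclusion hBC u) (Set.inclusion hBC v) ≤ (G.induce B).dist u v := by
  obtain ⟨p, hp⟩ := hB.exists_walk_length_eq_dist u v
  calc (G.induce C).edist (Set.inclusion hBC u) (Set.inclusion hBC v)
      ≤ (p.map (induceHomOfLE G hBC).toHom).length := edist_le _
    _ = (G.induce B).dist u v := by rw [Walk.length_map, hp]

lemma RadiusLE.exists_edist_induce_le {B C : Set V} {r : ℕ} (hr : RadiusLE G B r)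
    (hBC : B ⊆ C) (hB : ConnSet G B) :
    ∃ c : B, ∀ v : B, (G.induce C).edist (Set.inclusion hBC c) (Set.inclusion hBC v) ≤ r :=
  let ⟨c, hc⟩ := hr
  ⟨c, fun v => (edist_induce_le_dist_of_subset hBC hB c v).trans (Nat.cast_le.mpr (hc v))⟩

lemma RadiusLE.edist_induce_le_two_mul {B C : Set V} {r : ℕ} (hr : RadiusLE G B r)
    (hBC : B ⊆ C) (hB : ConnSet G B) (u v : B) :
    (G.induce C).edist (Set.inclusion hBC u) (Set.inclusion hBC v) ≤ 2 * r := by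
  obtain ⟨c, hc⟩ := hr.exists_edist_induce_le hBC hB
  calc (G.induce C).edist (Set.inclusion hBC u) (Set.inclusion hBC v)
      ≤ (G.induce C).edist (Set.inclusion hBC u) (Set.inclusion hBC c)
        + (G.induce C).edist (Set.inclusion hBC c) (Set.inclusion hBC v) :=
        SimpleGraph.edist_triangle
    _ ≤ r + r := by
      rw [edist_comm]
      exact add_le_add (hc u) (hc v)
    _ = 2 * r := by ring

lemma Touch.exists_edist_induce_le_one {A B C : Set V} (h : Touch G A B) (hA : A ⊆ C)
    (hB : B ⊆ C) :
    ∃ a : A, ∃ b : B, (G.induce C).edist (Set.inclusion hA a) (Set.inclusion hB b) ≤ 1 := by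
  rcases h with ⟨x, hxA, hxB⟩ | ⟨a, ha, b, hb, hab⟩
  · exact ⟨⟨x, hxA⟩, ⟨x, hxB⟩, by simp⟩
  · exact ⟨⟨a, ha⟩, ⟨b, hb⟩, (edist_eq_one_iff_adj.mpr
    (show (G.induce C).Adj (Set.inclusion hA ⟨a, ha⟩) (Set.inclusion hB ⟨b, hb⟩) from hab)).le⟩

lemma connSet_and_radiusLE_of_edist_le {C : Set V} (c : C) {n : ℕ}
    (h : ∀ v : C, (G.induce C).edist c v ≤ n) : ConnSet G C ∧ RadiusLE G C n := by
  have hreach (v : C) : (G.induce C).Reachable c v :=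
    reachable_of_edist_ne_top ((h v).trans_lt (ENat.natCast_lt_top n)).ne
  refine ⟨(connected_iff_exists_forall_reachable _).mpr ⟨c, hreach⟩, c, fun v => ?_⟩
  exact_mod_cast (hreach v).coe_dist_eq_edist ▸ h v

lemma IsBramble.mono {r r' : ℕ} {𝓑 𝓑' : Finset (Set V)} (h : IsBramble G r 𝓑) (h𝓑 : 𝓑' ⊆ 𝓑)
    (hr : r ≤ r') : IsBramble G r' 𝓑' :=
  ⟨fun B hB => ⟨(h.1 B (h𝓑 hB)).1, (h.1 B (h𝓑 hB)).2.mono hr⟩,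
    fun B hB C hC => h.2 B (h𝓑 hB) C (h𝓑 hC)⟩

lemma IsBramble.isTBramble_one {r : ℕ} {𝓑 : Finset (Set V)} (h : IsBramble G r 𝓑) :
    IsTBramble G r 1 𝓑 :=
  ⟨h, fun f hf => by simpa [Set.Nonempty] using (h.1 _ (hf 0)).1.nonempty⟩

/-- Route from the centre `c` of a fixed `B₀ ∈ 𝓑` to `v ∈ B`: at most `r` steps to where `B₀`
touches `B`, one more step into `B`, and at most `2r` steps inside `B`. -/
lemma IsBramble.biUnion {r : ℕ} {𝓑 : Finset (Set V)} (h : IsBramble G r 𝓑) (hne : 𝓑.Nonempty) :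
    ConnSet G (⋃ B ∈ 𝓑, B) ∧ RadiusLE G (⋃ B ∈ 𝓑, B) (3 * r + 1) := by
  obtain ⟨B₀, hB₀⟩ := hne
  have hsub {B} (hB : B ∈ 𝓑) : B ⊆ ⋃ B ∈ 𝓑, B := Set.subset_biUnion_of_mem (u := id) hB
  obtain ⟨hconn₀, hrad₀⟩ := h.1 B₀ hB₀
  obtain ⟨c, hc⟩ := hrad₀.exists_edist_induce_le (hsub hB₀) hconn₀
  refine connSet_and_radiusLE_of_edist_le (Set.inclusion (hsub hB₀) c) fun v => ?_
  obtain ⟨B, hB, hvB⟩ := Set.mem_iUnion₂.mp v.2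
  obtain ⟨a, b, hab⟩ := (h.2 B₀ hB₀ B hB).exists_edist_induce_le_one (hsub hB₀) (hsub hB)
  have hbv := (h.1 B hB).2.edist_induce_le_two_mul (hsub hB) (h.1 B hB).1 b ⟨v, hvB⟩
  set H := G.induce (⋃ B ∈ 𝓑, B)
  calc H.edist (Set.inclusion (hsub hB₀) c) v
      ≤ H.edist (Set.inclusion (hsub hB₀) c) (Set.inclusion (hsub hB₀) a)
        + H.edist (Set.inclusion (hsub hB₀) a) (Set.inclusion (hsub hB) b)
        + H.edist (Set.inclusion (hsub hB) b) v :=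
        SimpleGraph.edist_triangle.trans (add_le_add_left SimpleGraph.edist_triangle _)
    _ ≤ r + 1 + 2 * r := add_le_add (add_le_add (hc a) hab) hbv
    _ = (3 * r + 1 : ℕ) := by push_cast; ring

end InducedDistance

section BrambleOrder

variable {𝓑 : Finset (Set V)}

lemma brambleOrder_le_card {X : Finset V} (h : IsHittingSet 𝓑 X) : brambleOrder 𝓑 ≤ #X :=
  Nat.sInf_le ⟨X, rfl, h⟩

variable [Fintype V]

lemma isHittingSet_univ (h : ∀ B ∈ 𝓑, B.Nonempty) : IsHittingSet 𝓑 univ := fun B hB =>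
  let ⟨x, hx⟩ := h B hB
  ⟨x, mem_univ x, hx⟩

lemma brambleOrder_le_card_univ : brambleOrder 𝓑 ≤ Fintype.card V := by
  by_cases h : ∀ B ∈ 𝓑, B.Nonempty
  · exact brambleOrder_le_card (isHittingSet_univ h)
  · obtain ⟨B, hB, hBe⟩ : ∃ B ∈ 𝓑, B = ∅ := by
      simpa [Set.not_nonempty_iff_eq_empty] using h
    have hempty : {n | ∃ X : Finset V, #X = n ∧ IsHittingSet 𝓑 X} = ∅ := by
      refine Set.eq_empty_of_forall_notMem ?_
      rintro n ⟨X, -, hX⟩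
      obtain ⟨x, -, hx⟩ := hX B hB
      simp [hBe] at hx
    simp [brambleOrder, hempty]

lemma exists_isHittingSet_card_eq_brambleOrder (h : ∀ B ∈ 𝓑, B.Nonempty) :
    ∃ X : Finset V, #X = brambleOrder 𝓑 ∧ IsHittingSet 𝓑 X :=
  Nat.sInf_mem (s := {n | ∃ X : Finset V, #X = n ∧ IsHittingSet 𝓑 X})
    ⟨_, univ, rfl, isHittingSet_univ h⟩

lemma lt_brambleOrder {s : ℕ} (hne : ∀ B ∈ 𝓑, B.Nonempty)
    (h : ∀ X : Finset V, IsHittingSet 𝓑 X → s < #X) : s < brambleOrder 𝓑 :=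
  let ⟨X, hX, hhit⟩ := exists_isHittingSet_card_eq_brambleOrder hne
  hX ▸ h X hhit

lemma brambleOrder_le_bnT {G : SimpleGraph V} {r t : ℕ} (h : IsTBramble G r t 𝓑) :
    brambleOrder 𝓑 ≤ bnT G r t :=
  le_csSup ⟨Fintype.card V, by rintro _ ⟨𝓒, -, rfl⟩; exact brambleOrder_le_card_univ⟩ ⟨𝓑, h, rfl⟩

end BrambleOrder

open Classical in
lemma exists_mem_forall_mem_of_card_filter_notMem_le {ι : Type*} [Fintype ι] (S : Finset V)
    (f : ι → Set V) {s : ℕ} (hf : ∀ i, #(S.filter (· ∉ f i)) ≤ s) (hS : Fintype.card ι * s < #S) :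
    ∃ x ∈ S, ∀ i, x ∈ f i := by
  by_contra! hmiss
  have hcover : S ⊆ univ.biUnion fun i => S.filter (· ∉ f i) := fun x hx =>
    let ⟨i, hi⟩ := hmiss x hx
    mem_biUnion.mpr ⟨i, mem_univ i, mem_filter.mpr ⟨hx, hi⟩⟩
  have : #S ≤ Fintype.card ι * s :=
    calc #S ≤ #(univ.biUnion fun i => S.filter (· ∉ f i)) := card_le_card hcover
      _ ≤ ∑ i, #(S.filter (· ∉ f i)) := card_biUnion_le
      _ ≤ ∑ _i : ι, s := sum_le_sum fun i _ => hf i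
      _ = Fintype.card ι * s := by simp
  omega

section Construction

variable {G : SimpleGraph V} [Fintype V]

open Classical in
noncomputable def nearCovers (G : SimpleGraph V) (k : ℕ) (S : Finset V) (s : ℕ) :
    Finset (Set V) :=
  univ.filter fun C => ConnSet G C ∧ RadiusLE G C k ∧ #(S.filter (· ∉ C)) ≤ s

open Classical in
lemma mem_nearCovers {k s : ℕ} {S : Finset V} {C : Set V} :
    C ∈ nearCovers G k S s ↔ ConnSet G C ∧ RadiusLE G C k ∧ #(S.filter (· ∉ C)) ≤ s := by
  simp [nearCovers]

lemma isTBramble_nearCovers {k s t : ℕ} {S : Finset V} (ht : 2 ≤ t) (hS : t * s < #S) :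
    IsTBramble G k t (nearCovers G k S s) := by
  have hmiss {C} (hC : C ∈ nearCovers G k S s) := (mem_nearCovers.mp hC).2.2
  refine ⟨⟨fun C hC => ⟨(mem_nearCovers.mp hC).1, (mem_nearCovers.mp hC).2.1⟩,
    fun C hC C' hC' => Or.inl ?_⟩, fun f hf => ?_⟩
  · obtain ⟨x, -, hx⟩ := exists_mem_forall_mem_of_card_filter_notMem_le S ![C, C']
      (Fin.forall_fin_two.mpr ⟨hmiss hC, hmiss hC'⟩)
      (by simpa using (Nat.mul_le_mul_right s ht).trans_lt hS)
    exact ⟨x, hx 0, hx 1⟩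
  · obtain ⟨x, -, hx⟩ := exists_mem_forall_mem_of_card_filter_notMem_le S f
      (fun i => hmiss (hf i)) (by simpa using hS)
    exact ⟨x, Set.mem_iInter.mpr hx⟩

open Classical in
lemma IsBramble.exists_mem_nearCovers_forall_notMem {r s : ℕ} {𝓑 : Finset (Set V)}
    (h𝓑 : IsBramble G r 𝓑) {S : Finset V} (hS : IsHittingSet 𝓑 S) (hSmin : #S ≤ brambleOrder 𝓑)
    {X : Finset V} (hX : #X < brambleOrder 𝓑) (hXs : #X ≤ s) :
    ∃ C ∈ nearCovers G (3 * r + 1) S s, ∀ x ∈ X, x ∉ C := by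
  set 𝓑' := 𝓑.filter fun B => ∀ x ∈ X, x ∉ B
  have hne : 𝓑'.Nonempty := by
    refine filter_nonempty_iff.mpr ?_
    by_contra! hXhit
    exact (brambleOrder_le_card hXhit).not_gt hX
  set C := ⋃ B ∈ 𝓑', B
  have hXC : ∀ x ∈ X, x ∉ C := by
    intro x hx hxC
    obtain ⟨B, hB, hxB⟩ := Set.mem_iUnion₂.mp hxC
    exact (mem_filter.mp hB).2 x hx hxB
  have hhit : IsHittingSet 𝓑 (X ∪ S.filter (· ∈ C)) := by
    intro B hB
    by_cases hB' : ∀ x ∈ X, x ∉ B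
    · obtain ⟨x, hxS, hxB⟩ := hS B hB
      have hxC : x ∈ C := Set.mem_biUnion (mem_filter.mpr ⟨hB, hB'⟩) hxB
      exact ⟨x, mem_union_right _ (mem_filter.mpr ⟨hxS, hxC⟩), hxB⟩
    · push Not at hB'
      obtain ⟨x, hx, hxB⟩ := hB'
      exact ⟨x, mem_union_left _ hx, hxB⟩
  have hmiss : #(S.filter (· ∉ C)) ≤ s := by
    have := brambleOrder_le_card hhit
    have := card_union_le X (S.filter (· ∈ C))
    have := card_filter_add_card_filter_not (s := S) (· ∈ C)
    omega
  obtain ⟨hconn, hrad⟩ := (h𝓑.mono (filter_subset _ _) le_rfl).biUnion hne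
  exact ⟨C, mem_nearCovers.mpr ⟨hconn, hrad, hmiss⟩, hXC⟩

lemma IsBramble.lt_brambleOrder_nearCovers {r s : ℕ} {𝓑 : Finset (Set V)}
    (h𝓑 : IsBramble G r 𝓑) {S : Finset V} (hS : IsHittingSet 𝓑 S) (hSmin : #S ≤ brambleOrder 𝓑)
    (hs : s < brambleOrder 𝓑) : s < brambleOrder (nearCovers G (3 * r + 1) S s) := by
  refine lt_brambleOrder (fun C hC => (mem_nearCovers.mp hC).1.nonempty) fun X hX => ?_
  by_contra! hXs
  obtain ⟨C, hC, hXC⟩ := h𝓑.exists_mem_nearCovers_forall_notMem hS hSmin (hXs.trans_lt hs) hXs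
  obtain ⟨x, hx, hxC⟩ := hX C hC
  exact hXC x hx hxC

lemma IsBramble.brambleOrder_le_mul_bnT {r t : ℕ} {𝓑 : Finset (Set V)} (h𝓑 : IsBramble G r 𝓑)
    (ht : 2 ≤ t) : brambleOrder 𝓑 ≤ t * bnT G (3 * r + 1) t := by
  obtain ⟨S, hS, hhit⟩ :=
    exists_isHittingSet_card_eq_brambleOrder fun B hB => (h𝓑.1 B hB).1.nonempty
  set k := brambleOrder 𝓑
  obtain hk | hk := k.eq_zero_or_pos
  · simp [hk]
  set s := (k - 1) / t
  have hts : t * s < #S := hS ▸ (Nat.mul_div_le (k - 1) t).trans_lt (by omega)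
  have hs : s < k := (Nat.div_le_self _ _).trans_lt (by omega)
  have hk_lt : k - 1 < t * (s + 1) := Nat.lt_mul_div_succ (k - 1) (by omega)
  calc k ≤ t * (s + 1) := by omega
    _ ≤ t * brambleOrder (nearCovers G (3 * r + 1) S s) :=
      Nat.mul_le_mul_left t (h𝓑.lt_brambleOrder_nearCovers hhit hS.le hs)
    _ ≤ t * bnT G (3 * r + 1) t :=
      Nat.mul_le_mul_left t (brambleOrder_le_bnT (isTBramble_nearCovers ht hts))

end Construction

/-- `bn_r(G) ≤ t · bn_{3r+1,t}(G)`. -/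
theorem bn_le_mul_bnT {V : Type*} [Fintype V] (G : SimpleGraph V) (r t : ℕ) (ht : 1 ≤ t) :
    bn G r ≤ t * bnT G (3 * r + 1) t := by
  refine csSup_le' ?_
  rintro _ ⟨𝓑, h𝓑, rfl⟩
  obtain rfl | ht := ht.eq_or_lt
  · rw [one_mul]
    exact brambleOrder_le_bnT (h𝓑.mono subset_rfl (by omega)).isTBramble_one
  · exact h𝓑.brambleOrder_le_mul_bnT ht
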